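/- Let n = 5/2, q = 2, k < 0, and let c ∈ ℝ. Fix a sign ε ∈ {1, −1}. Then the function u(t,r) = ε·5(3t + r²)/((r(15t + r²) + c√r)·√(−2k)) is a solution of the semilinear radial heat equation u_t = u_rr + (3/2) r⁻¹ u_r + k u³ on any open subset of {(t,r) : r > 0, r(15t + r²) + c√r ≠ 0}. -/

import Mathlib

noncomputable section

def pdt (u : ℝ × ℝ → ℝ) (p : ℝ × ℝ) : ℝ := deriv (fun s => u (s, p.2)) p.1

def pdr (u : ℝ × ℝ → ℝ) (p : ℝ × ℝ) : ℝ := deriv (fun s => u (p.1, s)) p.2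

def pdrr (u : ℝ × ℝ → ℝ) (p : ℝ × ℝ) : ℝ :=
  deriv (fun s => deriv (fun s' => u (p.1, s')) s) p.2

/-- The semilinear radial heat equation for `n = 5/2`, `q = 2`:
`u_t = u_rr + (3/2) r⁻¹ u_r + k u³`. -/
def HeatEqCubic (k : ℝ) (u : ℝ × ℝ → ℝ) (p : ℝ × ℝ) : Prop :=
  pdt u p = pdrr u p + (3 / 2) * (p.2)⁻¹ * pdr u p + k * u p ^ 3

/-! Writing `a = √(-2k)`, the solution is `(e / a) · w` with
`w = 5(3t + r²) / (r(15t + r²) + c√r)`. Since `HeatEqCubic` is linear except for the cubic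
term, multiplying a solution by `λ` divides the coefficient of `u³` by `λ²`; as
`k (e / a)² = -1/2`, it suffices that `w` solves `w_t = w_rr + (3/2) r⁻¹ w_r - w³/2`, which after
substituting `r = S²` is an identity between rational functions of `t` and `S`. -/

open Topology Real

theorem heatEqCubic_of_hasDerivAt {k t r ut urr : ℝ} (u : ℝ × ℝ → ℝ) (ur : ℝ → ℝ)
    (ht : HasDerivAt (fun s => u (s, r)) ut t)
    (hr : ∀ᶠ y in 𝓝 r, HasDerivAt (fun s => u (t, s)) (ur y) y)
    (hrr : HasDerivAt ur urr r)
    (h : ut = urr + 3 / 2 * r⁻¹ * ur r + k * u (t, r) ^ 3) :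
    HeatEqCubic k u (t, r) := by
  have hur : deriv (fun s => u (t, s)) =ᶠ[𝓝 r] ur := hr.mono fun y hy => hy.deriv
  rwa [HeatEqCubic, pdt, pdr, pdrr, ht.deriv, hr.self_of_nhds.deriv, hur.deriv_eq, hrr.deriv]

theorem HeatEqCubic.const_mul {k a : ℝ} {w : ℝ × ℝ → ℝ} {p : ℝ × ℝ}
    (hw : HeatEqCubic (k * a ^ 2) w p) : HeatEqCubic k (fun q => a * w q) p := by
  simp only [HeatEqCubic, pdt, pdr, pdrr] at *
  simp only [deriv_const_mul_field]
  linear_combination a * hw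

section Profile

variable (t c : ℝ)

def profileDenom (y : ℝ) : ℝ := y * (15 * t + y ^ 2) + c * √y

def profileDenomDeriv (y : ℝ) : ℝ := 15 * t + 3 * y ^ 2 + c / (2 * √y)

theorem hasDerivAt_profileDenom {y : ℝ} (hy : 0 < y) :
    HasDerivAt (profileDenom t c) (profileDenomDeriv t c y) y := by
  have h := ((hasDerivAt_id' y).mul ((hasDerivAt_pow 2 y).const_add (15 * t))).add
    ((hasDerivAt_sqrt hy.ne').const_mul c)
  refine h.congr_deriv ?_
  simp only [profileDenomDeriv]
  field_simp
  ring

theorem hasDerivAt_profileDenomDeriv {y : ℝ} (hy : 0 < y) :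
    HasDerivAt (profileDenomDeriv t c) (6 * y - c / (4 * y * √y)) y := by
  have h := ((hasDerivAt_pow 2 y).const_mul 3).const_add (15 * t) |>.add
    ((hasDerivAt_const y c).div ((hasDerivAt_sqrt hy.ne').const_mul 2) (by positivity))
  refine h.congr_deriv ?_
  have h3 : √y ^ 3 = y * √y := by rw [pow_succ, sq_sqrt hy.le]
  field_simp
  rw [h3, sq_sqrt hy.le]
  ring

def profile (c : ℝ) (p : ℝ × ℝ) : ℝ := 5 * (3 * p.1 + p.2 ^ 2) / profileDenom p.1 c p.2

theorem hasDerivAt_profileNumer (y : ℝ) : HasDerivAt (fun y => 5 * (3 * t + y ^ 2)) (10 * y) y :=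
  (((hasDerivAt_pow 2 y).const_add (3 * t)).const_mul 5).congr_deriv (by norm_num; ring)

variable {t c} in
theorem heatEqCubic_profile {r : ℝ} (hr : 0 < r) (hG : profileDenom t c r ≠ 0) :
    HeatEqCubic (-1 / 2) (profile c) (t, r) := by
  have ht : HasDerivAt (fun s => profile c (s, r))
      ((15 * profileDenom t c r - 5 * (3 * t + r ^ 2) * (15 * r)) / profileDenom t c r ^ 2) t := by
    have hN := (((hasDerivAt_id' t).const_mul 3).add_const (r ^ 2)).const_mul 5
    have hG' := ((((hasDerivAt_id' t).const_mul 15).add_const (r ^ 2)).const_mul r).add_const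
      (c * √r)
    exact (hN.div hG' hG).congr_deriv (by simp only [profileDenom]; ring)
  set ur : ℝ → ℝ := fun y =>
    (10 * y * profileDenom t c y - 5 * (3 * t + y ^ 2) * profileDenomDeriv t c y) /
      profileDenom t c y ^ 2
  have hur : ∀ᶠ y in 𝓝 r, HasDerivAt (fun s => profile c (t, s)) (ur y) y := by
    filter_upwards [Ioi_mem_nhds hr,
      (hasDerivAt_profileDenom t c hr).continuousAt.eventually_ne hG] with y hy hGy
    exact (hasDerivAt_profileNumer t y).div (hasDerivAt_profileDenom t c hy) hGy
  have hurr := ((((hasDerivAt_id' r).const_mul 10).mul (hasDerivAt_profileDenom t c hr)).sub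
    ((hasDerivAt_profileNumer t r).mul (hasDerivAt_profileDenomDeriv t c hr))).div
    ((hasDerivAt_profileDenom t c hr).pow 2) (pow_ne_zero 2 hG)
  refine heatEqCubic_of_hasDerivAt _ ur ht hur hurr ?_
  obtain ⟨S, hS, rfl⟩ : ∃ S, 0 < S ∧ r = S ^ 2 := ⟨√r, sqrt_pos.mpr hr, (sq_sqrt hr.le).symm⟩
  have hG' : S * (15 * t + S ^ 4) + c ≠ 0 := by
    intro h; apply hG; simp only [profileDenom, sqrt_sq hS.le]; linear_combination S * h
  simp only [ur, profileDenom, profileDenomDeriv, profile, Pi.mul_apply, Pi.sub_apply,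
    Pi.pow_apply, sqrt_sq hS.le]
  field_simp
  ring

end Profile

theorem exact_solution_nonsimilarity_general (k c e : ℝ) (hk : k < 0) (he : e = 1 ∨ e = -1)
    (D : Set (ℝ × ℝ))
    (hDsub : D ⊆ {p : ℝ × ℝ | 0 < p.2 ∧
      p.2 * (15 * p.1 + p.2 ^ 2) + c * Real.sqrt p.2 ≠ 0}) :
    ∀ p ∈ D,
      HeatEqCubic k (fun p : ℝ × ℝ =>
        e * (5 * (3 * p.1 + p.2 ^ 2))
          / ((p.2 * (15 * p.1 + p.2 ^ 2) + c * Real.sqrt p.2)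
              * Real.sqrt (-2 * k))) p := by
  rintro ⟨t, r⟩ hp
  obtain ⟨hr, hG⟩ := hDsub hp
  have he2 : e ^ 2 = 1 := by rcases he with rfl | rfl <;> norm_num
  have hscale : k * (e / √(-2 * k)) ^ 2 = -1 / 2 := by
    rw [div_pow, sq_sqrt (by linarith), he2]
    field_simp [hk.ne]
  have hu : (fun p : ℝ × ℝ => e * (5 * (3 * p.1 + p.2 ^ 2))
      / ((p.2 * (15 * p.1 + p.2 ^ 2) + c * √p.2) * √(-2 * k)))
      = fun p => e / √(-2 * k) * profile c p := by
    funext p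
    rw [profile, profileDenom, div_mul_div_comm, mul_comm √(-2 * k)]
  rw [hu]
  exact HeatEqCubic.const_mul (hscale ▸ heatEqCubic_profile hr hG)

/-- the non-similarity exact solution
`u = ε 5(3t+r²)/((r(15t+r²)+c√r)√(-2k))` for `n = 5/2`, `q = 2`, `k < 0`. -/
theorem exact_solution_nonsimilarity (k c e : ℝ) (hk : k < 0) (he : e = 1 ∨ e = -1)
    (D : Set (ℝ × ℝ)) (hD : IsOpen D)
    (hDsub : D ⊆ {p : ℝ × ℝ | 0 < p.2 ∧
      p.2 * (15 * p.1 + p.2 ^ 2) + c * Real.sqrt p.2 ≠ 0}) :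
    ∀ p ∈ D,
      HeatEqCubic k (fun p : ℝ × ℝ =>
        e * (5 * (3 * p.1 + p.2 ^ 2))
          / ((p.2 * (15 * p.1 + p.2 ^ 2) + c * Real.sqrt p.2)
              * Real.sqrt (-2 * k))) p :=
  exact_solution_nonsimilarity_general k c e hk he D hDsub
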